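/- arXiv:2309.10953 — 5 statements merged into one kernel-verified Lean document; each statement's English description precedes it below -/
import Mathlib

section
/- Let β > 0, σ > 0 and c₁, c₂, c₃, c₄, c₅ ∈ ℝ with c₁ + c₃ > 0 and c₁ + c₃ − c₁c₂ ≠ 0. Define Γ̂₂ = (−β + √(β² + 8(c₁+c₃)))/4, m̂ = c₃c₄/(c₁ + c₃ − c₁c₂), Γ̂₁ = −2Γ̂₂c₃c₄/(Γ̂₂(β + 2Γ̂₂) − c₁c₂), Γ̂₀ = (c₅m̂² + c₃c₄² + c₁c₂²m̂² + σ²Γ̂₂ − Γ̂₁²/2)/β, and v̂(x) = Γ̂₂x² + Γ̂₁x + Γ̂₀. Then for every x ∈ ℝ, β·v̂(x) = inf over a ∈ ℝ of [ (1/2)a² + c₁(x − c₂m̂)² + c₃(x − c₄)² + c₅m̂² + a·v̂'(x) + (σ²/2)·v̂''(x) ], and this infimum is attained at the unique point a = −v̂'(x) = −(2Γ̂₂x + Γ̂₁). -/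
open Real

lemma quad_deriv (a b c : ℝ) :
    deriv (fun x : ℝ => a * x ^ 2 + b * x + c) = fun x => 2 * a * x + b := by
  funext y
  have h : HasDerivAt (fun x : ℝ => a * x ^ 2 + b * x + c) (2 * a * y + b) y := by
    have h1 : HasDerivAt (fun x : ℝ => x ^ 2) (2 * y) y := by
      simpa using hasDerivAt_pow 2 y
    have h2 := (h1.const_mul a).add ((hasDerivAt_id y).const_mul b)
    simpa [mul_comm, mul_assoc, mul_left_comm] using (h2.add_const c)
  exact h.deriv

lemma lin_deriv (a b : ℝ) :
    deriv (fun x : ℝ => 2 * a * x + b) = fun _ => 2 * a := by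
  funext y
  have h : HasDerivAt (fun x : ℝ => 2 * a * x + b) (2 * a) y := by
    simpa using ((hasDerivAt_id y).const_mul (2 * a)).add_const b
  exact h.deriv

/-- The quadratic function `v̂(x) = Γ̂₂x² + Γ̂₁x + Γ̂₀` with the explicit LQ-MFG
coefficients satisfies the stationary HJB equation
`β v̂(x) = inf_a { ½a² + c₁(x−c₂m̂)² + c₃(x−c₄)² + c₅m̂² + a v̂'(x) + (σ²/2) v̂''(x) }`,
with the infimum attained at the unique point `a = −v̂'(x) = −(2Γ̂₂x + Γ̂₁)`. -/
theorem lq_mfg_hjb (β σ c₁ c₂ c₃ c₄ c₅ : ℝ) (hβ : 0 < β) (hσ : 0 < σ)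
    (hk : 0 < c₁ + c₃) (hden : c₁ + c₃ - c₁ * c₂ ≠ 0) :
    let Γ₂ : ℝ := (-β + Real.sqrt (β ^ 2 + 8 * (c₁ + c₃))) / 4
    let m : ℝ := c₃ * c₄ / (c₁ + c₃ - c₁ * c₂)
    let Γ₁ : ℝ := -(2 * Γ₂ * c₃ * c₄) / (Γ₂ * (β + 2 * Γ₂) - c₁ * c₂)
    let Γ₀ : ℝ := (c₅ * m ^ 2 + c₃ * c₄ ^ 2 + c₁ * c₂ ^ 2 * m ^ 2 + σ ^ 2 * Γ₂
      - Γ₁ ^ 2 / 2) / β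
    let v : ℝ → ℝ := fun x => Γ₂ * x ^ 2 + Γ₁ * x + Γ₀
    ∀ x : ℝ,
      let F : ℝ → ℝ := fun a =>
        (1 / 2) * a ^ 2 + c₁ * (x - c₂ * m) ^ 2 + c₃ * (x - c₄) ^ 2 + c₅ * m ^ 2
          + a * deriv v x + (σ ^ 2 / 2) * deriv (deriv v) x
      (β * v x = ⨅ a : ℝ, F a) ∧
        -deriv v x = -(2 * Γ₂ * x + Γ₁) ∧
        (∀ a : ℝ, F (-deriv v x) ≤ F a) ∧
        (∀ a : ℝ, F a = F (-deriv v x) → a = -deriv v x) := by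
  intro Γ₂ m Γ₁ Γ₀ v
  have hsq : Real.sqrt (β ^ 2 + 8 * (c₁ + c₃)) ^ 2 = β ^ 2 + 8 * (c₁ + c₃) :=
    Real.sq_sqrt (by nlinarith)
  have hΓ2 : Γ₂ * (β + 2 * Γ₂) = c₁ + c₃ := by
    show ((-β + Real.sqrt (β ^ 2 + 8 * (c₁ + c₃))) / 4) *
      (β + 2 * ((-β + Real.sqrt (β ^ 2 + 8 * (c₁ + c₃))) / 4)) = c₁ + c₃
    nlinarith [hsq]
  have hden2 : Γ₂ * (β + 2 * Γ₂) - c₁ * c₂ ≠ 0 := by rw [hΓ2]; exact hden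
  have hm : m * (c₁ + c₃ - c₁ * c₂) = c₃ * c₄ := by
    show (c₃ * c₄ / (c₁ + c₃ - c₁ * c₂)) * _ = _
    field_simp
  have hΓ1 : Γ₁ * (c₁ + c₃ - c₁ * c₂) = -(2 * Γ₂ * c₃ * c₄) := by
    have : Γ₁ * (Γ₂ * (β + 2 * Γ₂) - c₁ * c₂) = -(2 * Γ₂ * c₃ * c₄) := by
      show (-(2 * Γ₂ * c₃ * c₄) / (Γ₂ * (β + 2 * Γ₂) - c₁ * c₂)) * _ = _
      field_simp
    rwa [hΓ2] at this
  have hΓ0 : β * Γ₀ = c₅ * m ^ 2 + c₃ * c₄ ^ 2 + c₁ * c₂ ^ 2 * m ^ 2 + σ ^ 2 * Γ₂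
      - Γ₁ ^ 2 / 2 := by
    show β * ((c₅ * m ^ 2 + c₃ * c₄ ^ 2 + c₁ * c₂ ^ 2 * m ^ 2 + σ ^ 2 * Γ₂
      - Γ₁ ^ 2 / 2) / β) = _
    field_simp
  have hvdef : v = fun y => Γ₂ * y ^ 2 + Γ₁ * y + Γ₀ := rfl
  clear_value Γ₂ m Γ₁ Γ₀ v
  clear hsq hden2
  subst hvdef
  intro x F
  have hlin : Γ₁ * (β + 2 * Γ₂) = -2 * (c₁ * c₂ * m + c₃ * c₄) := by
    have h1 : Γ₁ * (β + 2 * Γ₂) * (c₁ + c₃ - c₁ * c₂)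
        = -2 * (c₁ * c₂ * m + c₃ * c₄) * (c₁ + c₃ - c₁ * c₂) := by
      linear_combination (β + 2 * Γ₂) * hΓ1 - 2 * c₃ * c₄ * hΓ2 + 2 * c₁ * c₂ * hm
    exact mul_right_cancel₀ hden h1
  have hdv : deriv (fun y : ℝ => Γ₂ * y ^ 2 + Γ₁ * y + Γ₀) = fun y => 2 * Γ₂ * y + Γ₁ :=
    quad_deriv Γ₂ Γ₁ Γ₀
  have hddv : deriv (deriv (fun y : ℝ => Γ₂ * y ^ 2 + Γ₁ * y + Γ₀)) = fun _ => 2 * Γ₂ := by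
    rw [hdv]; exact lin_deriv Γ₂ Γ₁
  have hdvx : deriv (fun y : ℝ => Γ₂ * y ^ 2 + Γ₁ * y + Γ₀) x = 2 * Γ₂ * x + Γ₁ := by
    rw [hdv]
  have hddvx : deriv (deriv (fun y : ℝ => Γ₂ * y ^ 2 + Γ₁ * y + Γ₀)) x = 2 * Γ₂ := by
    rw [hddv]
  set p : ℝ := 2 * Γ₂ * x + Γ₁ with hp
  clear_value p
  have hF : ∀ a : ℝ, F a = (1 / 2) * a ^ 2 + c₁ * (x - c₂ * m) ^ 2 + c₃ * (x - c₄) ^ 2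
      + c₅ * m ^ 2 + a * p + (σ ^ 2 / 2) * (2 * Γ₂) := by
    intro a; simp only [F, hdvx, hddvx]
  have hmin : ∀ a : ℝ, F (-p) ≤ F a := by
    intro a; rw [hF, hF]; nlinarith [sq_nonneg (a + p)]
  have huniq : ∀ a : ℝ, F a = F (-p) → a = -p := by
    intro a h; rw [hF, hF] at h; nlinarith [sq_nonneg (a + p)]
  have hinf : (⨅ a : ℝ, F a) = F (-p) := by
    apply le_antisymm
    · exact ciInf_le ⟨F (-p), fun y ⟨a, ha⟩ => ha ▸ hmin a⟩ (-p)
    · exact le_ciInf hmin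
  have hmain : β * (Γ₂ * x ^ 2 + Γ₁ * x + Γ₀) = F (-p) := by
    rw [hF]
    linear_combination x ^ 2 * hΓ2 + x * hlin + hΓ0 + ((p + 2 * Γ₂ * x + Γ₁) / 2) * hp
  refine ⟨by rw [hinf]; exact hmain, by rw [hdvx], ?_, ?_⟩
  · intro a; rw [hdvx]; exact hmin a
  · intro a h; rw [hdvx] at h ⊢; exact huniq a h
end

section
/- Let β > 0 and c₁, c₂, c₃, c₄, c₅ ∈ ℝ with c₁ + c₃ > 0, c₁ + c₃ − c₁c₂ ≠ 0 and c₁ + c₃ + c₅ − c₁c₂(2 − c₂) ≠ 0. Set m̂ = c₃c₄/(c₁ + c₃ − c₁c₂) (the mean field game equilibrium mean) and m* = c₃c₄/(c₁ + c₃ + c₅ − c₁c₂(2 − c₂)) (the mean field control optimal mean), and note Γ̂₂ = Γ₂* = (−β + √(β² + 8(c₁+c₃)))/4 so the two stationary Gaussian distributions have the same variance σ²/(4Γ̂₂). Then m̂ = m* if and only if c₃c₄ = 0 or c₅ = c₁c₂(1 − c₂); in particular, if c₃c₄ ≠ 0 and c₅ ≠ c₁c₂(1 − c₂), the mean field game and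 mean field control solutions are distinct (the stationary means differ while the variances coincide). -/
/-- Comparison of the MFG equilibrium mean `m̂ = c₃c₄/(c₁+c₃−c₁c₂)` and the MFC
optimal mean `m* = c₃c₄/(c₁+c₃+c₅−c₁c₂(2−c₂))`: the two stationary Gaussians have the
same variance `σ²/(4Γ̂₂)` (since `Γ̂₂ = Γ₂*`), and `m̂ = m*` iff `c₃c₄ = 0` or
`c₅ = c₁c₂(1−c₂)`; in particular if `c₃c₄ ≠ 0` and `c₅ ≠ c₁c₂(1−c₂)` the solutions
are distinct. -/
theorem lq_mfg_mfc_distinct (β σ c₁ c₂ c₃ c₄ c₅ : ℝ) (hβ : 0 < β)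
    (hk : 0 < c₁ + c₃) (hden₁ : c₁ + c₃ - c₁ * c₂ ≠ 0)
    (hden₂ : c₁ + c₃ + c₅ - c₁ * c₂ * (2 - c₂) ≠ 0) :
    let Γ₂mfg : ℝ := (-β + Real.sqrt (β ^ 2 + 8 * (c₁ + c₃))) / 4
    let Γ₂mfc : ℝ := (-β + Real.sqrt (β ^ 2 + 8 * (c₁ + c₃))) / 4
    let mhat : ℝ := c₃ * c₄ / (c₁ + c₃ - c₁ * c₂)
    let mstar : ℝ := c₃ * c₄ / (c₁ + c₃ + c₅ - c₁ * c₂ * (2 - c₂))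
    (σ ^ 2 / (4 * Γ₂mfg) = σ ^ 2 / (4 * Γ₂mfc)) ∧
      (mhat = mstar ↔ c₃ * c₄ = 0 ∨ c₅ = c₁ * c₂ * (1 - c₂)) ∧
      (c₃ * c₄ ≠ 0 → c₅ ≠ c₁ * c₂ * (1 - c₂) → mhat ≠ mstar) := by
  intro Γ₂mfg Γ₂mfc mhat mstar
  have hiff : mhat = mstar ↔ c₃ * c₄ = 0 ∨ c₅ = c₁ * c₂ * (1 - c₂) := by
    have h : mhat = mstar ↔ c₃ * c₄ * (c₁ + c₃ + c₅ - c₁ * c₂ * (2 - c₂))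
        = c₃ * c₄ * (c₁ + c₃ - c₁ * c₂) := by
      rw [div_eq_div_iff hden₁ hden₂]
    rw [h]
    constructor
    · intro he
      have : c₃ * c₄ * (c₅ - c₁ * c₂ * (1 - c₂)) = 0 := by linarith [he]
      rcases mul_eq_zero.mp this with h1 | h1
      · exact Or.inl h1
      · exact Or.inr (by linarith)
    · rintro (h1 | h1)
      · rw [h1]; ring
      · rw [h1]; ring
  exact ⟨rfl, hiff, fun h1 h2 he => h2 ((hiff.mp he).resolve_left h1)⟩
end

section
/- Let p : ℝ → ℝ be a continuously differentiable, strictly positive probability density, and let s = p'/p be its score function (s(x) = (log p)'(x)). Let Σ : ℝ → ℝ be continuously differentiable. Assume that the functions x ↦ p(x)Σ'(x), x ↦ p(x)Σ(x)², x ↦ p(x)Σ(x)s(x) and x ↦ p(x)s(x)² are Lebesgue integrable on ℝ, and that p(x)Σ(x) → 0 as x → +∞ and as x → −∞. Then ∫_ℝ p(x)[Σ'(x) + (1/2)Σ(x)²] dx = (1/2)∫_ℝ p(x)(Σ(x) − s(x))² dx − (1/2)∫_ℝ p(x)s(x)² dx. -/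
open MeasureTheory Filter

/-! Integration by parts, with the boundary terms killed by the decay of `p Σ`, gives Stein's
identity `∫ p Σ' = -∫ p' Σ = -∫ p Σ s`; expanding the square in `∫ p (Σ - s)²` then leaves exactly
the two sides of the identity. -/

theorem integral_mul_deriv_eq_neg_integral_mul_mul_logDeriv {p σ : ℝ → ℝ}
    (hp : Differentiable ℝ p) (hp0 : ∀ x, p x ≠ 0) (hσ : Differentiable ℝ σ)
    (hpσ' : Integrable fun x => p x * deriv σ x)
    (hpσs : Integrable fun x => p x * (σ x * (deriv p x / p x)))
    (hbot : Tendsto (fun x => p x * σ x) atBot (nhds 0))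
    (htop : Tendsto (fun x => p x * σ x) atTop (nhds 0)) :
    ∫ x, p x * deriv σ x = -∫ x, p x * (σ x * (deriv p x / p x)) := by
  have hscore : (fun x => p x * (σ x * (deriv p x / p x))) = fun x => deriv p x * σ x := by
    ext x
    field_simp [hp0 x]
  rw [hscore] at hpσs ⊢
  have := integral_mul_deriv_eq_deriv_mul (fun x _ => (hp x).hasDerivAt)
    (fun x _ => (hσ x).hasDerivAt) hpσ' hpσs hbot htop
  simpa using this

theorem integral_mul_sub_sq {α : Type*} [MeasurableSpace α] {μ : Measure α} {w f g : α → ℝ}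
    (hff : Integrable (fun x => w x * f x ^ 2) μ) (hfg : Integrable (fun x => w x * (f x * g x)) μ)
    (hgg : Integrable (fun x => w x * g x ^ 2) μ) :
    ∫ x, w x * (f x - g x) ^ 2 ∂μ
      = ∫ x, w x * f x ^ 2 ∂μ - 2 * ∫ x, w x * (f x * g x) ∂μ + ∫ x, w x * g x ^ 2 ∂μ := by
  have hcross : Integrable (fun x => w x * f x ^ 2 - 2 * (w x * (f x * g x))) μ :=
    hff.sub (hfg.const_mul 2)
  rw [← integral_const_mul, ← integral_sub hff (hfg.const_mul 2), ← integral_add hcross hgg]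
  congr 1 with x
  ring

theorem score_matching_identity_general (p Sig : ℝ → ℝ)
    (hp : ContDiff ℝ 1 p) (hppos : ∀ x, 0 < p x)
    (hSig : ContDiff ℝ 1 Sig)
    (s : ℝ → ℝ) (hs : s = fun x => deriv p x / p x)
    (hint1 : Integrable (fun x => p x * deriv Sig x))
    (hint2 : Integrable (fun x => p x * (Sig x) ^ 2))
    (hint3 : Integrable (fun x => p x * (Sig x * s x)))
    (hint4 : Integrable (fun x => p x * (s x) ^ 2))
    (hdecayTop : Tendsto (fun x => p x * Sig x) atTop (nhds 0))
    (hdecayBot : Tendsto (fun x => p x * Sig x) atBot (nhds 0)) :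
    ∫ x : ℝ, p x * (deriv Sig x + (1 / 2) * (Sig x) ^ 2)
      = (1 / 2) * (∫ x : ℝ, p x * (Sig x - s x) ^ 2)
        - (1 / 2) * (∫ x : ℝ, p x * (s x) ^ 2) := by
  have hsplit : ∫ x, p x * (deriv Sig x + (1 / 2) * (Sig x) ^ 2)
      = (∫ x, p x * deriv Sig x) + (1 / 2) * ∫ x, p x * (Sig x) ^ 2 := by
    rw [← integral_const_mul, ← integral_add hint1 (hint2.const_mul _)]
    congr 1 with x
    ring
  have hstein : ∫ x, p x * deriv Sig x = -∫ x, p x * (Sig x * s x) := by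
    subst hs
    exact integral_mul_deriv_eq_neg_integral_mul_mul_logDeriv (hp.differentiable one_ne_zero)
      (fun x => (hppos x).ne') (hSig.differentiable one_ne_zero) hint1 hint3 hdecayBot hdecayTop
  rw [hsplit, hstein, integral_mul_sub_sq hint2 hint3 hint4]
  ring

/-- Score-matching identity (Hyvärinen, 1-dimensional): for a `C¹` strictly positive
probability density `p` with score `s = p'/p`, and a `C¹` function `Sig` with suitable
integrability and decay, the score-matching objective `∫ p(Sig' + ½Sig²)` equals
`½∫ p(Sig − s)² − ½∫ p s²`. -/
theorem score_matching_identity (p Sig : ℝ → ℝ)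
    (hp : ContDiff ℝ 1 p) (hppos : ∀ x, 0 < p x)
    (hpdens : ∫ x : ℝ, p x = 1)
    (hSig : ContDiff ℝ 1 Sig)
    (s : ℝ → ℝ) (hs : s = fun x => deriv p x / p x)
    (hint1 : Integrable (fun x => p x * deriv Sig x))
    (hint2 : Integrable (fun x => p x * (Sig x) ^ 2))
    (hint3 : Integrable (fun x => p x * (Sig x * s x)))
    (hint4 : Integrable (fun x => p x * (s x) ^ 2))
    (hdecayTop : Tendsto (fun x => p x * Sig x) atTop (nhds 0))
    (hdecayBot : Tendsto (fun x => p x * Sig x) atBot (nhds 0)) :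
    ∫ x : ℝ, p x * (deriv Sig x + (1 / 2) * (Sig x) ^ 2)
      = (1 / 2) * (∫ x : ℝ, p x * (Sig x - s x) ^ 2)
        - (1 / 2) * (∫ x : ℝ, p x * (s x) ^ 2) :=
  score_matching_identity_general p Sig hp hppos hSig s hs hint1 hint2 hint3 hint4 hdecayTop
    hdecayBot
end

section
/- Let p : ℝ → ℝ be a continuously differentiable, strictly positive probability density with score s = p'/p, and let Σ : ℝ → ℝ be continuously differentiable, with x ↦ p(x)Σ'(x), p(x)Σ(x)², p(x)Σ(x)s(x), p(x)s(x)² Lebesgue integrable on ℝ and p(x)Σ(x) → 0 as x → ±∞. Then ∫_ℝ p(x)[Σ'(x) + (1/2)Σ(x)²] dx ≥ −(1/2)∫_ℝ p(x)s(x)² dx, with equality if and only if Σ(x) = s(x) for every x ∈ ℝ. -/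
open MeasureTheory Filter

/-! Integrating by parts, `∫ p Σ' = -∫ p' Σ = -∫ p Σ s` (the boundary terms vanish since
`p Σ → 0` at `±∞`). Completing the square then gives the score-matching identity
`∫ p (Σ' + Σ²/2) = -½ ∫ p s² + ½ ∫ p (Σ - s)²`, and the residual `∫ p (Σ - s)²` of a continuous,
nonnegative integrand vanishes exactly when `Σ = s`, because `p > 0`. -/

theorem Continuous.integral_eq_zero_iff_of_nonneg {X : Type*} [TopologicalSpace X]
    [MeasurableSpace X] [OpensMeasurableSpace X] {μ : Measure X} [μ.IsOpenPosMeasure]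
    {g : X → ℝ} (hg : Continuous g) (hg_nonneg : 0 ≤ g) (hg_int : Integrable g μ) :
    ∫ x, g x ∂μ = 0 ↔ g = 0 := by
  rw [MeasureTheory.integral_eq_zero_iff_of_nonneg hg_nonneg hg_int,
    hg.ae_eq_iff_eq μ continuous_zero]

section ScoreMatching

variable {p Sig s : ℝ → ℝ}

theorem integral_mul_deriv_eq_neg_integral_mul_score (hp : Differentiable ℝ p)
    (hSig : Differentiable ℝ Sig) (hps : ∀ x, deriv p x = p x * s x)
    (hint1 : Integrable fun x => p x * deriv Sig x)
    (hint3 : Integrable fun x => p x * (Sig x * s x))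
    (hdecayBot : Tendsto (fun x => p x * Sig x) atBot (nhds 0))
    (hdecayTop : Tendsto (fun x => p x * Sig x) atTop (nhds 0)) :
    ∫ x, p x * deriv Sig x = -∫ x, p x * (Sig x * s x) := by
  have hderiv_mul : deriv p * Sig = fun x => p x * (Sig x * s x) := by
    ext x
    simp only [Pi.mul_apply, hps]
    ring
  have hparts := integral_mul_deriv_eq_deriv_mul (fun x _ => (hp x).hasDerivAt)
    (fun x _ => (hSig x).hasDerivAt) hint1 (hderiv_mul ▸ hint3) hdecayBot hdecayTop
  rw [hparts, sub_self, zero_sub, ← hderiv_mul]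
  rfl

theorem mul_sq_sub_eq_expand :
    (fun x => p x * (Sig x - s x) ^ 2)
      = fun x => p x * Sig x ^ 2 - 2 * (p x * (Sig x * s x)) + p x * s x ^ 2 := by
  ext x
  ring

theorem integrable_mul_sq_sub (hint2 : Integrable fun x => p x * Sig x ^ 2)
    (hint3 : Integrable fun x => p x * (Sig x * s x))
    (hint4 : Integrable fun x => p x * s x ^ 2) :
    Integrable fun x => p x * (Sig x - s x) ^ 2 :=
  mul_sq_sub_eq_expand ▸ (hint2.sub (hint3.const_mul 2)).add hint4

theorem integral_mul_sq_sub (hint2 : Integrable fun x => p x * Sig x ^ 2)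
    (hint3 : Integrable fun x => p x * (Sig x * s x))
    (hint4 : Integrable fun x => p x * s x ^ 2) :
    ∫ x, p x * (Sig x - s x) ^ 2
      = (∫ x, p x * Sig x ^ 2) - 2 * (∫ x, p x * (Sig x * s x)) + ∫ x, p x * s x ^ 2 := by
  have hint23 : Integrable fun x => p x * Sig x ^ 2 - 2 * (p x * (Sig x * s x)) :=
    hint2.sub (hint3.const_mul 2)
  rw [mul_sq_sub_eq_expand, integral_add hint23 hint4, integral_sub hint2 (hint3.const_mul 2),
    integral_const_mul]

theorem integral_score_matching_eq (hp : Differentiable ℝ p) (hSig : Differentiable ℝ Sig)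
    (hps : ∀ x, deriv p x = p x * s x)
    (hint1 : Integrable fun x => p x * deriv Sig x)
    (hint2 : Integrable fun x => p x * Sig x ^ 2)
    (hint3 : Integrable fun x => p x * (Sig x * s x))
    (hint4 : Integrable fun x => p x * s x ^ 2)
    (hdecayBot : Tendsto (fun x => p x * Sig x) atBot (nhds 0))
    (hdecayTop : Tendsto (fun x => p x * Sig x) atTop (nhds 0)) :
    ∫ x, p x * (deriv Sig x + 1 / 2 * Sig x ^ 2)
      = -(1 / 2) * (∫ x, p x * s x ^ 2) + 1 / 2 * ∫ x, p x * (Sig x - s x) ^ 2 := by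
  have hsplit : (fun x => p x * (deriv Sig x + 1 / 2 * Sig x ^ 2))
      = fun x => p x * deriv Sig x + 1 / 2 * (p x * Sig x ^ 2) := by
    ext x
    ring
  rw [hsplit, integral_add hint1 (hint2.const_mul _), integral_const_mul,
    integral_mul_deriv_eq_neg_integral_mul_score hp hSig hps hint1 hint3 hdecayBot hdecayTop,
    integral_mul_sq_sub hint2 hint3 hint4]
  ring

end ScoreMatching

theorem score_matching_minimizer_general (p Sig : ℝ → ℝ)
    (hp : ContDiff ℝ 1 p) (hppos : ∀ x, 0 < p x)
    (hSig : ContDiff ℝ 1 Sig)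
    (s : ℝ → ℝ) (hs : s = fun x => deriv p x / p x)
    (hint1 : Integrable (fun x => p x * deriv Sig x))
    (hint2 : Integrable (fun x => p x * (Sig x) ^ 2))
    (hint3 : Integrable (fun x => p x * (Sig x * s x)))
    (hint4 : Integrable (fun x => p x * (s x) ^ 2))
    (hdecayTop : Tendsto (fun x => p x * Sig x) atTop (nhds 0))
    (hdecayBot : Tendsto (fun x => p x * Sig x) atBot (nhds 0)) :
    (∫ x : ℝ, p x * (deriv Sig x + (1 / 2) * (Sig x) ^ 2))
      ≥ -(1 / 2) * (∫ x : ℝ, p x * (s x) ^ 2) ∧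
    ((∫ x : ℝ, p x * (deriv Sig x + (1 / 2) * (Sig x) ^ 2))
      = -(1 / 2) * (∫ x : ℝ, p x * (s x) ^ 2) ↔ ∀ x, Sig x = s x) := by
  have hps : ∀ x, deriv p x = p x * s x := fun x => by
    rw [hs, mul_div_cancel₀ _ (hppos x).ne']
  have hs_cont : Continuous s :=
    hs ▸ (hp.continuous_deriv le_rfl).div hp.continuous fun x => (hppos x).ne'
  have hres_nonneg : 0 ≤ fun x => p x * (Sig x - s x) ^ 2 :=
    fun x => mul_nonneg (hppos x).le (sq_nonneg _)
  have hres_cont : Continuous fun x => p x * (Sig x - s x) ^ 2 :=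
    hp.continuous.mul ((hSig.continuous.sub hs_cont).pow 2)
  rw [integral_score_matching_eq (hp.differentiable one_ne_zero)
    (hSig.differentiable one_ne_zero) hps hint1 hint2 hint3 hint4 hdecayBot hdecayTop]
  refine ⟨le_add_of_nonneg_right (mul_nonneg one_half_pos.le (integral_nonneg hres_nonneg)), ?_⟩
  rw [add_eq_left, mul_eq_zero, or_iff_right (by norm_num),
    hres_cont.integral_eq_zero_iff_of_nonneg hres_nonneg
      (integrable_mul_sq_sub hint2 hint3 hint4), funext_iff]
  simp [(hppos _).ne', sub_eq_zero]

/-- Score-matching lower bound (Hyvärinen, 1-dimensional): under the same hypotheses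
as the score-matching identity, `∫ p(Sig' + ½Sig²) ≥ −½∫ p s²`, with equality iff
`Sig` equals the score `s` everywhere. -/
theorem score_matching_minimizer (p Sig : ℝ → ℝ)
    (hp : ContDiff ℝ 1 p) (hppos : ∀ x, 0 < p x)
    (hpdens : ∫ x : ℝ, p x = 1)
    (hSig : ContDiff ℝ 1 Sig)
    (s : ℝ → ℝ) (hs : s = fun x => deriv p x / p x)
    (hint1 : Integrable (fun x => p x * deriv Sig x))
    (hint2 : Integrable (fun x => p x * (Sig x) ^ 2))
    (hint3 : Integrable (fun x => p x * (Sig x * s x)))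
    (hint4 : Integrable (fun x => p x * (s x) ^ 2))
    (hdecayTop : Tendsto (fun x => p x * Sig x) atTop (nhds 0))
    (hdecayBot : Tendsto (fun x => p x * Sig x) atBot (nhds 0)) :
    (∫ x : ℝ, p x * (deriv Sig x + (1 / 2) * (Sig x) ^ 2))
      ≥ -(1 / 2) * (∫ x : ℝ, p x * (s x) ^ 2) ∧
    ((∫ x : ℝ, p x * (deriv Sig x + (1 / 2) * (Sig x) ^ 2))
      = -(1 / 2) * (∫ x : ℝ, p x * (s x) ^ 2) ↔ ∀ x, Sig x = s x) :=
  score_matching_minimizer_general p Sig hp hppos hSig s hs hint1 hint2 hint3 hint4 hdecayTop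
    hdecayBot
end

section
/- Let β > 0 and c₁, c₂, c₃, c₄, c̃₁, c̃₂, c̃₅ ∈ ℝ with c₁ + c₃ + c̃₁ > 0 and D := c₁(1 − c₂) + c̃₁(1 − c̃₂)² + c₃ + c̃₅ ≠ 0. Let Γ₂ = (−β + √(β² + 8(c₁ + c₃ + c̃₁)))/4 and Γ₁ = −2Γ₂c₃c₄/D. Then: (i) Γ₂ is the unique positive root of 2Γ² + βΓ − (c₁ + c₃ + c̃₁) = 0; (ii) Γ₂(β + 2Γ₂) − c₁c₂ − c̃₁c̃₂(2 − c̃₂) + c̃₅ = D; and (iii) the equilibrium mean of the mean field control game satisfies m := −Γ₁/(2Γ₂) = c₃c₄/D = c₃c₄/(c₁(1 − c₂) + c̃₁(1 − c̃₂)² + c₃ + c̃₅). -/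
/-- In the LQ mean field control game: (i) `Γ₂` is the unique positive root of
`2Γ² + βΓ − (c₁+c₃+c̃₁) = 0`; (ii) `Γ₂(β + 2Γ₂) − c₁c₂ − c̃₁c̃₂(2 − c̃₂) + c̃₅ = D`;
(iii) the equilibrium mean is `m = −Γ₁/(2Γ₂) = c₃c₄/D` where
`D = c₁(1−c₂) + c̃₁(1−c̃₂)² + c₃ + c̃₅`. -/
theorem lq_mfcg_equilibrium_mean (β c₁ c₂ c₃ c₄ ct₁ ct₂ ct₅ : ℝ) (hβ : 0 < β)
    (hk : 0 < c₁ + c₃ + ct₁)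
    (hD : c₁ * (1 - c₂) + ct₁ * (1 - ct₂) ^ 2 + c₃ + ct₅ ≠ 0) :
    let D : ℝ := c₁ * (1 - c₂) + ct₁ * (1 - ct₂) ^ 2 + c₃ + ct₅
    let Γ₂ : ℝ := (-β + Real.sqrt (β ^ 2 + 8 * (c₁ + c₃ + ct₁))) / 4
    let Γ₁ : ℝ := -(2 * Γ₂ * c₃ * c₄) / D
    (2 * Γ₂ ^ 2 + β * Γ₂ - (c₁ + c₃ + ct₁) = 0 ∧ 0 < Γ₂ ∧
      ∀ x : ℝ, 0 < x → 2 * x ^ 2 + β * x - (c₁ + c₃ + ct₁) = 0 → x = Γ₂) ∧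
    Γ₂ * (β + 2 * Γ₂) - c₁ * c₂ - ct₁ * ct₂ * (2 - ct₂) + ct₅ = D ∧
    -Γ₁ / (2 * Γ₂) = c₃ * c₄ / D := by
  intro D Γ₂ Γ₁
  set s := Real.sqrt (β ^ 2 + 8 * (c₁ + c₃ + ct₁)) with hs
  have hnn : (0:ℝ) ≤ β ^ 2 + 8 * (c₁ + c₃ + ct₁) := by positivity
  have hs2 : s ^ 2 = β ^ 2 + 8 * (c₁ + c₃ + ct₁) := Real.sq_sqrt hnn
  have hsβ : β < s := by
    have : β = Real.sqrt (β ^ 2) := by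
      rw [Real.sqrt_sq hβ.le]
    rw [this, hs]
    apply Real.sqrt_lt_sqrt (by positivity)
    nlinarith
  have hroot : 2 * Γ₂ ^ 2 + β * Γ₂ - (c₁ + c₃ + ct₁) = 0 := by
    show 2 * ((-β + s)/4) ^ 2 + β * ((-β + s)/4) - (c₁ + c₃ + ct₁) = 0
    nlinarith [hs2]
  have hΓpos : 0 < Γ₂ := by
    show 0 < (-β + s)/4
    linarith
  refine ⟨⟨hroot, hΓpos, ?_⟩, ?_, ?_⟩
  · intro x hx hxe
    have : (x - Γ₂) * (2 * x + 2 * Γ₂ + β) = 0 := by nlinarith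
    have h2 : 2 * x + 2 * Γ₂ + β > 0 := by linarith
    rcases mul_eq_zero.mp this with h | h
    · linarith
    · linarith
  · show Γ₂ * (β + 2 * Γ₂) - c₁ * c₂ - ct₁ * ct₂ * (2 - ct₂) + ct₅ = c₁ * (1 - c₂) + ct₁ * (1 - ct₂) ^ 2 + c₃ + ct₅
    nlinarith [hroot]
  · have hΓne : (2 * Γ₂) ≠ 0 := by positivity
    show -(-(2 * Γ₂ * c₃ * c₄) / D) / (2 * Γ₂) = c₃ * c₄ / D
    field_simp
end
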